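/- arXiv:1812.09389 — 5 statements merged into one kernel-verified Lean document; each statement's English description precedes it below -/
import Mathlib

section
/- For all nonnegative integers k and l, the sum over all integral points (α,β) of the hexagon with vertices (k+l,l), (k+l,0), (l,0), (0,l), (0,k+l), (l,k+l), weighting each point on the j-th layer from the boundary by j+1 (with all points in the final degenerate triangular layer weighted min(k,l)+1), equals (k+1)(l+1)(k+l+2)/2. -/
open Finset

/-- The multiplicity `n_{α,β}` of the lattice point `(α,β)` in the hexagon `H(k,l)` with
vertices `(k+l,l),(k+l,0),(l,0),(0,l),(0,k+l),(l,k+l)`: it is `j+1` where `j` is the layer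
index (distance to the boundary), capped at `min k l` for the degenerate triangular layer.
Points outside the hexagon get weight `0`. -/
def hexWeight (k l α β : ℕ) : ℕ :=
  if l ≤ α + β ∧ α + β ≤ k + 2 * l ∧ α ≤ k + l ∧ β ≤ k + l then
    min (min (min α β) (min (k + l - α) (k + l - β)))
        (min (min (α + β - l) (k + 2 * l - (α + β))) (min k l)) + 1
  else 0

lemma count_band (a b α N : ℕ) :
    ∑ β ∈ range N, (if a ≤ α + β ∧ α + β ≤ b then (1:ℕ) else 0)
      = min (b + 1 - α) N - min (a - α) N := by
  induction N with
  | zero => simp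
  | succ n ih => rw [sum_range_succ, ih]; split_ifs <;> omega

lemma gauss (n : ℕ) : 2 * ∑ i ∈ range n, i = n * (n - 1) := by
  rw [mul_comm]; exact sum_range_id_mul_two n

lemma sum_succ_id (n : ℕ) : 2 * ∑ α ∈ range n, (α + 1) = n * (n + 1) := by
  have h : ∑ i ∈ range (n+1), i = ∑ α ∈ range n, (α + 1) + 0 := sum_range_succ' _ n
  have h2 := gauss (n + 1)
  rw [h] at h2
  simp only [Nat.add_zero] at h2
  rw [h2]
  have : n + 1 - 1 = n := by omega
  rw [this, mul_comm]

lemma hexWeight_vanish (k l α β : ℕ) (h : k + l < α ∨ k + l < β) :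
    hexWeight k l α β = 0 := by
  simp only [hexWeight]
  rw [if_neg (by omega)]

set_option maxHeartbeats 1000000 in
lemma step' (k l α β : ℕ) (hα : α ≤ k + l + 2) (hβ : β ≤ k + l + 2) :
    hexWeight (k+1) (l+1) α β
      = (if l + 1 ≤ α + β ∧ α + β ≤ k + 2 * l + 3 then 1 else 0)
        + (if 1 ≤ α ∧ 1 ≤ β then hexWeight k l (α-1) (β-1) else 0) := by
  cases α with
  | zero =>
      simp only [hexWeight]
      split_ifs <;> omega
  | succ a =>
    cases β with
    | zero =>
        simp only [hexWeight]
        split_ifs <;> omega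
    | succ b =>
        by_cases hc : l ≤ a + b ∧ a + b ≤ k + 2 * l ∧ a ≤ k + l ∧ b ≤ k + l
        · simp only [hexWeight, Nat.add_sub_cancel]
          rw [if_pos (by omega), if_pos (by omega), if_pos (by omega),
            if_pos hc]
          have e3 : k + 1 + (l + 1) - (a + 1) = (k + l - a) + 1 := by omega
          have e4 : k + 1 + (l + 1) - (b + 1) = (k + l - b) + 1 := by omega
          have e5 : a + 1 + (b + 1) - (l + 1) = (a + b - l) + 1 := by omega
          have e6 : k + 1 + 2 * (l + 1) - (a + 1 + (b + 1)) = (k + 2 * l - (a + b)) + 1 := by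
            omega
          have e7 : min (k + 1) (l + 1) = min k l + 1 := by omega
          rw [e3, e4, e5, e6, e7]
          simp only [min_add_add_right]
          omega
        · simp only [hexWeight, Nat.add_sub_cancel]
          rw [if_neg hc, ite_self]
          split_ifs with h1 h2
          · have h0 : (a + 1 + (b + 1) - (l + 1) = 0)
                ∨ (k + 1 + 2 * (l + 1) - (a + 1 + (b + 1)) = 0)
                ∨ (k + 1 + (l + 1) - (a + 1) = 0)
                ∨ (k + 1 + (l + 1) - (b + 1) = 0) := by omega
            rcases h0 with e|e|e|e <;> simp [e]
          · exfalso; omega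
          · exfalso; omega
          · rfl

lemma shift_sum (k l : ℕ) :
    ∑ α ∈ range (k+l+3), ∑ β ∈ range (k+l+3),
      (if 1 ≤ α ∧ 1 ≤ β then hexWeight k l (α-1) (β-1) else 0)
    = ∑ α ∈ range (k+l+1), ∑ β ∈ range (k+l+1), hexWeight k l α β := by
  rw [sum_range_succ' (fun α => ∑ β ∈ range (k+l+3),
      (if 1 ≤ α ∧ 1 ≤ β then hexWeight k l (α-1) (β-1) else 0)) (k+l+2)]
  simp only [Nat.add_sub_cancel, Nat.le_add_left, true_and]
  have hz : ∑ β ∈ range (k+l+3),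
      (if 1 ≤ (0:ℕ) ∧ 1 ≤ β then hexWeight k l (0-1) (β-1) else 0) = 0 := by
    simp
  rw [hz, Nat.add_zero]
  have hin : ∀ α : ℕ, ∑ β ∈ range (k+l+3),
      (if 1 ≤ β then hexWeight k l α (β-1) else 0)
      = ∑ β ∈ range (k+l+2), hexWeight k l α β := by
    intro α
    rw [sum_range_succ' (fun β => if 1 ≤ β then hexWeight k l α (β-1) else 0) (k+l+2)]
    simp [Nat.add_sub_cancel]
  simp only [hin]
  -- shrink ranges from k+l+2 to k+l+1
  rw [sum_range_succ (fun α => ∑ β ∈ range (k+l+2), hexWeight k l α β) (k+l+1)]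
  have hz2 : ∑ β ∈ range (k+l+2), hexWeight k l (k+l+1) β = 0 :=
    sum_eq_zero fun β _ => hexWeight_vanish k l _ β (by omega)
  rw [hz2, Nat.add_zero]
  refine sum_congr rfl fun α hα => ?_
  rw [sum_range_succ, hexWeight_vanish k l α (k+l+1) (by omega), Nat.add_zero]

lemma sum_const_add (c n : ℕ) : ∑ α ∈ range n, (c + α) = n * c + ∑ α ∈ range n, α := by
  induction n with
  | zero => simp
  | succ m ih => rw [sum_range_succ, sum_range_succ, ih]; ring

lemma count_hex (k l : ℕ) :
    2 * ∑ α ∈ range (k+l+3), (min (k + 2*l + 3 + 1 - α) (k+l+3) - min (l + 1 - α) (k+l+3))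
      = 2*(l+2)*(k+2) + (l+2)*(l+1) + 2*(k+1)*(l+2) + (k+1)*k := by
  rw [show k+l+3 = (l+2)+(k+1) from by omega]
  rw [sum_range_add]
  have p1 : ∑ α ∈ range (l+2),
      (min (k + 2*l + 3 + 1 - α) ((l+2)+(k+1)) - min (l + 1 - α) ((l+2)+(k+1)))
      = ∑ α ∈ range (l+2), (k+2+α) := by
    refine sum_congr rfl fun α hα => ?_
    rw [mem_range] at hα; omega
  have p2 : ∑ j ∈ range (k+1),
      (min (k + 2*l + 3 + 1 - ((l+2)+j)) ((l+2)+(k+1)) - min (l + 1 - ((l+2)+j)) ((l+2)+(k+1)))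
      = ∑ j ∈ range (k+1), (k+l+2-j) := by
    refine sum_congr rfl fun j hj => ?_
    rw [mem_range] at hj; omega
  have p2' : ∑ j ∈ range (k+1), (k+l+2-j) = ∑ j ∈ range (k+1), (l+2+j) := by
    rw [← sum_range_reflect (fun j => k+l+2-j) (k+1)]
    refine sum_congr rfl fun j hj => ?_
    rw [mem_range] at hj; omega
  rw [p1, p2, p2', sum_const_add, sum_const_add]
  have g1 : 2 * ∑ i ∈ range (l+2), i = (l+2)*(l+1) := by
    rw [gauss]; congr 1
  have g2 : 2 * ∑ i ∈ range (k+1), i = (k+1)*k := by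
    rw [gauss]; congr 1
  linarith [g1, g2]

lemma main_sum (l : ℕ) : ∀ k : ℕ,
    2 * ∑ α ∈ range (k + l + 1), ∑ β ∈ range (k + l + 1), hexWeight k l α β
      = (k + 1) * (l + 1) * (k + l + 2) := by
  induction l with
  | zero =>
    intro k
    have hw0 : ∀ α β : ℕ, hexWeight k 0 α β
        = if 0 ≤ α + β ∧ α + β ≤ k then 1 else 0 := by
      intro α β; simp only [hexWeight]; split_ifs <;> omega
    simp only [Nat.add_zero, hw0, count_band]
    have h1 : ∑ α ∈ range (k+1), (min (k + 1 - α) (k+1) - min (0 - α) (k+1))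
        = ∑ α ∈ range (k+1), (k+1-α) := by
      refine sum_congr rfl fun α hα => ?_
      rw [mem_range] at hα; omega
    have h2 : ∑ α ∈ range (k+1), (k+1-α) = ∑ α ∈ range (k+1), (α+1) := by
      rw [← sum_range_reflect (fun α => k+1-α) (k+1)]
      refine sum_congr rfl fun α hα => ?_
      rw [mem_range] at hα; omega
    rw [h1, h2, sum_succ_id]
    ring
  | succ l IH =>
    intro k
    cases k with
    | zero =>
      have hr : 0 + (l+1) + 1 = l + 2 := by omega
      rw [hr]
      have hw : ∀ α ∈ range (l+2), ∀ β ∈ range (l+2), hexWeight 0 (l+1) α β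
          = if l+1 ≤ α + β ∧ α + β ≤ 2*l+2 then 1 else 0 := by
        intro α hα β hβ
        rw [mem_range] at hα hβ
        simp only [hexWeight]
        split_ifs <;> omega
      rw [sum_congr rfl fun α hα => sum_congr rfl fun β hβ => hw α hα β hβ]
      simp only [count_band]
      have h1 : ∑ α ∈ range (l+2), (min (2*l+2+1-α) (l+2) - min (l+1-α) (l+2))
          = ∑ α ∈ range (l+2), (α+1) := by
        refine sum_congr rfl fun α hα => ?_
        rw [mem_range] at hα; omega
      rw [h1, sum_succ_id]
      ring
    | succ k =>
      have hr : k + 1 + (l+1) + 1 = k + l + 3 := by omega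
      rw [hr]
      have hsplit : ∀ α ∈ range (k+l+3), ∀ β ∈ range (k+l+3),
          hexWeight (k+1) (l+1) α β
            = (if l + 1 ≤ α + β ∧ α + β ≤ k + 2 * l + 3 then 1 else 0)
              + (if 1 ≤ α ∧ 1 ≤ β then hexWeight k l (α-1) (β-1) else 0) := by
        intro α hα β hβ
        rw [mem_range] at hα hβ
        exact step' k l α β (by omega) (by omega)
      rw [sum_congr rfl fun α hα => sum_congr rfl fun β hβ => hsplit α hα β hβ]
      simp only [sum_add_distrib, count_band]
      rw [Nat.mul_add]
      rw [count_hex k l, shift_sum k l, IH k]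
      have : (k + 1 + 1) * (l + 1 + 1) * (k + 1 + (l + 1) + 2)
          = 2*(l+2)*(k+2) + (l+2)*(l+1) + 2*(k+1)*(l+2) + (k+1)*k
            + (k + 1) * (l + 1) * (k + l + 2) := by ring
      rw [this]

/-- The weighted count of lattice points of the hexagon `H(k,l)` equals the Weyl dimension
`(k+1)(l+1)(k+l+2)/2` of the irreducible `sl₃`-representation of highest weight `(k,l)`. -/
theorem hexagon_weighted_count (k l : ℕ) :
    (∑ α ∈ range (k + l + 1), ∑ β ∈ range (k + l + 1), hexWeight k l α β)
      = (k + 1) * (l + 1) * (k + l + 2) / 2 := by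
  have h := main_sum l k
  omega
end

section
/- For all nonnegative integers k, l with k ≥ l, Σ_{(α,β) ∈ L_l(k,l)} H_{α,β} = H_{L_l(k,l)}, i.e. summing the six-term alternating Schur expressions H_{α,β} over the lattice points of the innermost triangular layer yields the six-term expression s_{k+2l−l+1,k+l−l+1,0} − s_{k+l,k+1,0} + s_{2l−1,l,0} − s_{2l−1,l−1,0} + s_{k+l,l−1,0} − s_{k+l+1,l,0}. -/
open Finset

/-- The Schur polynomial in three variables, given by the bialternant formula
`s_{a,b,c}(x₁,x₂,x₃) = det(x_i^{a_j+3-j}) / ∏_{i<j} (x_i - x_j)`. -/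
noncomputable def schur {F : Type*} [Field F] (x1 x2 x3 : F) (a b c : ℕ) : F :=
  (x1 ^ (a + 2) * x2 ^ (b + 1) * x3 ^ c + x3 ^ (a + 2) * x1 ^ (b + 1) * x2 ^ c
    + x2 ^ (a + 2) * x3 ^ (b + 1) * x1 ^ c
    - x1 ^ (a + 2) * x3 ^ (b + 1) * x2 ^ c - x3 ^ (a + 2) * x2 ^ (b + 1) * x1 ^ c
    - x2 ^ (a + 2) * x1 ^ (b + 1) * x3 ^ c)
  / ((x1 - x2) * (x1 - x3) * (x2 - x3))
/-- `s_{a,b,0}` with integer indices, interpreted as `0` unless `a ≥ b ≥ 0`. -/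
noncomputable def sz {F : Type*} [Field F] (x1 x2 x3 : F) (a b : ℤ) : F :=
  if 0 ≤ b ∧ b ≤ a then schur x1 x2 x3 a.toNat b.toNat 0 else 0

/-- The six-term alternating Schur expression
`H_{α,β} = s_{α+β+1,α+1,0} - s_{α+β,α+1,0} + s_{α+β-1,α,0} - s_{α+β-1,α-1,0}
  + s_{α+β,α-1,0} - s_{α+β+1,α,0}`. -/
noncomputable def Hab {F : Type*} [Field F] (x1 x2 x3 : F) (α β : ℤ) : F :=
  sz x1 x2 x3 (α + β + 1) (α + 1) - sz x1 x2 x3 (α + β) (α + 1)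
    + sz x1 x2 x3 (α + β - 1) α - sz x1 x2 x3 (α + β - 1) (α - 1)
    + sz x1 x2 x3 (α + β) (α - 1) - sz x1 x2 x3 (α + β + 1) α

/-- The six-term expression `H_{L_i(k,l)}` attached to the `i`-th layer of the hexagon. -/
noncomputable def HL {F : Type*} [Field F] (x1 x2 x3 : F) (k l i : ℤ) : F :=
  sz x1 x2 x3 (k + 2 * l - i + 1) (k + l - i + 1) - sz x1 x2 x3 (k + l) (k + l - i + 1)
    + sz x1 x2 x3 (l + i - 1) l - sz x1 x2 x3 (l + i - 1) (i - 1)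
    + sz x1 x2 x3 (k + l) (i - 1) - sz x1 x2 x3 (k + 2 * l - i + 1) l
/-- The lattice points of the innermost (triangular) layer `L_l(k,l)`: the triangle with
vertices `(k,l),(l,l),(l,k)` (for `k ≥ l`). -/
def triangleLayer (k l : ℕ) : Finset (ℕ × ℕ) :=
  (range (k + 1) ×ˢ range (k + 1)).filter
    (fun p => l ≤ p.1 ∧ l ≤ p.2 ∧ p.1 + p.2 ≤ k + l)

lemma tele4 {M : Type*} [AddCommGroup M] (f1 f2 f3 f4 : ℕ → M) (n : ℕ) :
    ∑ i ∈ range n, (f1 (i+1) - f1 i + (f2 (i+1) - f2 i) + (f3 i - f3 (i+1)) + (f4 i - f4 (i+1)))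
      = f1 n - f1 0 + (f2 n - f2 0) + (f3 0 - f3 n) + (f4 0 - f4 n) := by
  induction n with
  | zero => simp
  | succ n ih => rw [Finset.sum_range_succ, ih]; abel

lemma key {M : Type*} [CommRing M] (g : ℤ → ℤ → M) (l : ℕ) :
    ∀ k, l ≤ k →
    (∑ p ∈ triangleLayer k l,
      (g ((p.1:ℤ) + p.2 + 1) (p.1 + 1) - g ((p.1:ℤ) + p.2) (p.1 + 1)
        + g ((p.1:ℤ) + p.2 - 1) p.1 - g ((p.1:ℤ) + p.2 - 1) (p.1 - 1)
        + g ((p.1:ℤ) + p.2) (p.1 - 1) - g ((p.1:ℤ) + p.2 + 1) p.1))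
      = g ((k:ℤ)+l+1) (k+1) - g ((k:ℤ)+l) (k+1) + g (2*(l:ℤ)-1) l - g (2*(l:ℤ)-1) (l-1)
        + g ((k:ℤ)+l) (l-1) - g ((k:ℤ)+l+1) l := by
  refine Nat.le_induction ?_ ?_
  · have h1 : triangleLayer l l = {(l, l)} := by
      ext ⟨a, b⟩
      simp only [triangleLayer, mem_filter, mem_product, mem_range, mem_singleton,
        Prod.mk.injEq]
      omega
    rw [h1, Finset.sum_singleton]
    ring_nf
  · intro k hkl ih
    set n := k + 2 - l with hn
    have hsplit : triangleLayer (k+1) l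
        = triangleLayer k l ∪ (range n).image (fun i => (l + i, k + 1 - i)) := by
      ext ⟨a, b⟩
      simp only [triangleLayer, mem_filter, mem_product, mem_range, mem_union, mem_image]
      constructor
      · rintro ⟨⟨ha, hb⟩, hla, hlb, hab⟩
        rcases le_or_gt (a + b) (k + l) with hc | hc
        · exact Or.inl ⟨⟨by omega, by omega⟩, hla, hlb, hc⟩
        · exact Or.inr ⟨a - l, by omega, by simp [Prod.ext_iff]; omega⟩
      · rintro (⟨⟨ha, hb⟩, hla, hlb, hab⟩ | ⟨i, hi, heq⟩)
        · exact ⟨⟨by omega, by omega⟩, hla, hlb, by omega⟩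
        · obtain ⟨h1, h2⟩ := Prod.mk.injEq .. ▸ heq
          refine ⟨⟨by omega, by omega⟩, by omega, by omega, by omega⟩
    have hdisj : Disjoint (triangleLayer k l)
        ((range n).image (fun i => (l + i, k + 1 - i))) := by
      rw [Finset.disjoint_left]
      rintro ⟨a, b⟩ hmem hmem'
      simp only [triangleLayer, mem_filter, mem_product, mem_range] at hmem
      simp only [mem_image, mem_range, Prod.mk.injEq] at hmem'
      obtain ⟨i, hi, h1, h2⟩ := hmem'
      omega
    have hinj : Set.InjOn (fun i => (l + i, k + 1 - i)) (range n) := by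
      intro i _ j _ hij
      simpa using congrArg Prod.fst hij
    rw [hsplit, Finset.sum_union hdisj, ih, Finset.sum_image hinj]
    have hcongr : ∀ i ∈ range n,
        (g ((↑(l+i):ℤ) + ↑(k+1-i) + 1) (↑(l+i) + 1) - g ((↑(l+i):ℤ) + ↑(k+1-i)) (↑(l+i) + 1)
          + g ((↑(l+i):ℤ) + ↑(k+1-i) - 1) ↑(l+i) - g ((↑(l+i):ℤ) + ↑(k+1-i) - 1) (↑(l+i) - 1)
          + g ((↑(l+i):ℤ) + ↑(k+1-i)) (↑(l+i) - 1) - g ((↑(l+i):ℤ) + ↑(k+1-i) + 1) ↑(l+i))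
        = (fun j : ℕ => g ((k:ℤ)+l+2) ((l:ℤ)+j)) (i+1) - (fun j : ℕ => g ((k:ℤ)+l+2) ((l:ℤ)+j)) i
          + ((fun j : ℕ => g ((k:ℤ)+l) ((l:ℤ)+j-1)) (i+1) - (fun j : ℕ => g ((k:ℤ)+l) ((l:ℤ)+j-1)) i)
          + ((fun j : ℕ => g ((k:ℤ)+l+1) ((l:ℤ)+j-1)) i - (fun j : ℕ => g ((k:ℤ)+l+1) ((l:ℤ)+j-1)) (i+1))
          + ((fun j : ℕ => g ((k:ℤ)+l+1) ((l:ℤ)+j)) i - (fun j : ℕ => g ((k:ℤ)+l+1) ((l:ℤ)+j)) (i+1)) := by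
      intro i hi
      simp only [mem_range] at hi
      have h1 : (↑(k+1-i) : ℤ) = (k:ℤ) + 1 - i := by omega
      have h2 : (↑(l+i) : ℤ) = (l:ℤ) + i := by push_cast; ring
      simp only [h1, h2]
      push_cast
      ring_nf
    rw [Finset.sum_congr rfl hcongr,
      tele4 (fun j : ℕ => g ((k:ℤ)+l+2) ((l:ℤ)+j)) (fun j : ℕ => g ((k:ℤ)+l) ((l:ℤ)+j-1))
        (fun j : ℕ => g ((k:ℤ)+l+1) ((l:ℤ)+j-1)) (fun j : ℕ => g ((k:ℤ)+l+1) ((l:ℤ)+j)) n]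
    have hn' : ((n:ℕ) : ℤ) = (k:ℤ) + 2 - l := by omega
    simp only [hn', Nat.cast_zero]
    push_cast
    ring_nf

/-- Summing `H_{α,β}` over the lattice points of the innermost triangular layer `L_l(k,l)`
yields `H_{L_l(k,l)}`, for `k ≥ l`. -/
theorem sum_Hab_triangle {F : Type*} [Field F] (x1 x2 x3 : F)
    (h : x1 * x2 * x3 = 1) (hv : (x1 - x2) * (x1 - x3) * (x2 - x3) ≠ 0)
    (k l : ℕ) (hkl : l ≤ k) :
    (∑ p ∈ triangleLayer k l, Hab x1 x2 x3 (p.1 : ℤ) (p.2 : ℤ))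
      = HL x1 x2 x3 (k : ℤ) (l : ℤ) (l : ℤ) := by
  have hk := key (sz x1 x2 x3) l k hkl
  simp only [Hab]
  rw [hk]
  simp only [HL]
  ring_nf
end

section
/- For all nonnegative integers k ≥ l and 0 ≤ i < l, Σ_{(α,β) ∈ L_i(k,l)} H_{α,β} = H_{L_{i+2}(k,l)} − 2·H_{L_{i+1}(k,l)} + H_{L_i(k,l)}, where H_{L_{l+1}(k,l)} is defined to be 0. -/
open Finset

/-- The `i`-th hexagonal boundary layer `L_i(k,l)` (for `i < l ≤ k`): the boundary of the
hexagon joining `(k+l-i,l),(k+l-i,i),(l,i),(i,l),(i,k+l-i),(l,k+l-i)`. -/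
def hexBoundaryLayer (k l i : ℕ) : Finset (ℕ × ℕ) :=
  (range (k + l + 1) ×ˢ range (k + l + 1)).filter
    (fun p => i ≤ p.1 ∧ p.1 ≤ k + l - i ∧ i ≤ p.2 ∧ p.2 ≤ k + l - i
      ∧ l + i ≤ p.1 + p.2 ∧ p.1 + p.2 ≤ k + 2 * l - i
      ∧ (p.1 = i ∨ p.1 = k + l - i ∨ p.2 = i ∨ p.2 = k + l - i
          ∨ p.1 + p.2 = l + i ∨ p.1 + p.2 = k + 2 * l - i))

/-- Potential for telescoping `Hab` in the `β` direction. -/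
noncomputable def Pb {F : Type*} [Field F] (x1 x2 x3 : F) (α β : ℤ) : F :=
  sz x1 x2 x3 (α+β+1) (α+1) - sz x1 x2 x3 (α+β) α - sz x1 x2 x3 (α+β+1) α + sz x1 x2 x3 (α+β) (α-1)
/-- Potential for telescoping `Hab` in the `α` direction. -/
noncomputable def Pa {F : Type*} [Field F] (x1 x2 x3 : F) (α β : ℤ) : F :=
  sz x1 x2 x3 (α+β+1) (α+1) + sz x1 x2 x3 (α+β) α - sz x1 x2 x3 (α+β) (α+1) - sz x1 x2 x3 (α+β+1) α
/-- Potential for telescoping `Hab` along diagonals `α+β = m`. -/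
noncomputable def Pd {F : Type*} [Field F] (x1 x2 x3 : F) (m α : ℤ) : F :=
  sz x1 x2 x3 (m+1) (α+1) - sz x1 x2 x3 m (α+1) - sz x1 x2 x3 m α + sz x1 x2 x3 (m-1) α

lemma Hab_Pb {F : Type*} [Field F] (x1 x2 x3 : F) (α β : ℤ) :
    Hab x1 x2 x3 α β = Pb x1 x2 x3 α β - Pb x1 x2 x3 α (β-1) := by
  simp only [Hab, Pb]; ring_nf
lemma Hab_Pa {F : Type*} [Field F] (x1 x2 x3 : F) (α β : ℤ) :
    Hab x1 x2 x3 α β = Pa x1 x2 x3 α β - Pa x1 x2 x3 (α-1) β := by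
  simp only [Hab, Pa]; ring_nf
lemma Hab_Pd {F : Type*} [Field F] (x1 x2 x3 : F) (α β : ℤ) :
    Hab x1 x2 x3 α β = Pd x1 x2 x3 (α+β) α - Pd x1 x2 x3 (α+β) (α-1) := by
  simp only [Hab, Pd]; ring_nf

/-- The corner identity: the twelve potential values at the hexagon corners combine to
the second difference of the `HL`'s.  A purely formal identity among `sz` terms. -/
lemma final_id {F : Type*} [Field F] (x1 x2 x3 : F) (K L I : ℤ) :
    (Pb x1 x2 x3 (K+L-I) (L-1) - Pb x1 x2 x3 (K+L-I) (I-1))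
    + (Pa x1 x2 x3 (K+L-I-1) I - Pa x1 x2 x3 (L-1) I)
    + (Pd x1 x2 x3 (L+I) (L-1) - Pd x1 x2 x3 (L+I) (I-1))
    + (Pb x1 x2 x3 I (K+L-I) - Pb x1 x2 x3 I L)
    + (Pa x1 x2 x3 L (K+L-I) - Pa x1 x2 x3 I (K+L-I))
    + (Pd x1 x2 x3 (K+2*L-I) (K+L-I) - Pd x1 x2 x3 (K+2*L-I) L)
    = HL x1 x2 x3 K L (I+2) - 2 * HL x1 x2 x3 K L (I+1) + HL x1 x2 x3 K L I := by
  simp only [Pb, Pa, Pd, HL]; ring_nf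

lemma sum_step {F : Type*} [Field F] {n : ℕ} (f : ℕ → F) (c : ℕ → F)
    (hc : ∀ t ∈ Finset.range n, c t = f (t+1) - f t) :
    ∑ t ∈ Finset.range n, c t = f n - f 0 := by
  rw [Finset.sum_congr rfl hc, Finset.sum_range_sub]

/-- The hexagonal boundary layer as a disjoint union of six half-open edges. -/
lemma hexBoundaryLayer_eq (k l i : ℕ) (hkl : l ≤ k) (hil : i < l) :
    hexBoundaryLayer k l i
    = ((range (l-i)).image (fun t => (k+l-i, i+t)))
      ∪ ((range (k-i)).image (fun t => (l+t, i)))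
      ∪ ((range (l-i)).image (fun t => (i+t, l-t)))
      ∪ ((range (k-i)).image (fun t => (i, l+1+t)))
      ∪ ((range (l-i)).image (fun t => (i+1+t, k+l-i)))
      ∪ ((range (k-i)).image (fun t => (l+1+t, k+l-i-1-t))) := by
  ext ⟨a, b⟩
  simp only [hexBoundaryLayer, mem_filter, mem_product, mem_range, mem_union, mem_image,
    Prod.mk.injEq]
  constructor
  · rintro ⟨⟨ha, hb⟩, h1, h2, h3, h4, h5, h6, hd⟩
    by_cases hA : a = i
    · by_cases hB : b = l
      · exact Or.inl (Or.inl (Or.inl (Or.inr ⟨a - i, by omega, by omega, by omega⟩)))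
      · exact Or.inl (Or.inl (Or.inr ⟨b - l - 1, by omega, by omega, by omega⟩))
    · by_cases hB : b = k + l - i
      · exact Or.inl (Or.inr ⟨a - i - 1, by omega, by omega, by omega⟩)
      · by_cases hD : a + b = k + 2 * l - i
        · exact Or.inr ⟨a - l - 1, by omega, by omega, by omega⟩
        · by_cases hA2 : a = k + l - i
          · exact Or.inl (Or.inl (Or.inl (Or.inl (Or.inl ⟨b - i, by omega, by omega, by omega⟩))))
          · by_cases hB2 : b = i
            · exact Or.inl (Or.inl (Or.inl (Or.inl (Or.inr ⟨a - l, by omega, by omega, by omega⟩))))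
            · exact Or.inl (Or.inl (Or.inl (Or.inr ⟨a - i, by omega, by omega, by omega⟩)))
  · rintro (((((⟨t, ht, rfl, rfl⟩ | ⟨t, ht, rfl, rfl⟩) | ⟨t, ht, rfl, rfl⟩) | ⟨t, ht, rfl, rfl⟩)
      | ⟨t, ht, rfl, rfl⟩) | ⟨t, ht, rfl, rfl⟩) <;> omega

/-- For `k ≥ l` and `0 ≤ i < l`, summing `H_{α,β}` over the `i`-th hexagonal boundary layer
gives `H_{L_{i+2}(k,l)} - 2·H_{L_{i+1}(k,l)} + H_{L_i(k,l)}` (where `H_{L_{l+1}(k,l)} = 0`,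
as the defining expression vanishes identically at `i = l+1`). -/
theorem sum_Hab_hexLayer {F : Type*} [Field F] (x1 x2 x3 : F)
    (h : x1 * x2 * x3 = 1) (hv : (x1 - x2) * (x1 - x3) * (x2 - x3) ≠ 0)
    (k l i : ℕ) (hkl : l ≤ k) (hil : i < l) :
    (∑ p ∈ hexBoundaryLayer k l i, Hab x1 x2 x3 (p.1 : ℤ) (p.2 : ℤ))
      = HL x1 x2 x3 (k : ℤ) (l : ℤ) ((i : ℤ) + 2) - 2 * HL x1 x2 x3 (k : ℤ) (l : ℤ) ((i : ℤ) + 1)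
        + HL x1 x2 x3 (k : ℤ) (l : ℤ) (i : ℤ) := by
  have d2 : Disjoint ((range (l-i)).image (fun t => (k+l-i, i+t)))
      ((range (k-i)).image (fun t => (l+t, i))) := by
    rw [Finset.disjoint_left]
    rintro ⟨a, b⟩ hm hm'
    simp only [mem_image, mem_range, Prod.mk.injEq] at hm hm'
    obtain ⟨t', ht', g1, g2⟩ := hm'
    obtain ⟨t, ht, h1, h2⟩ := hm
    omega
  have d3 : Disjoint (((range (l-i)).image (fun t => (k+l-i, i+t)))
      ∪ ((range (k-i)).image (fun t => (l+t, i))))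
      ((range (l-i)).image (fun t => (i+t, l-t))) := by
    rw [Finset.disjoint_left]
    rintro ⟨a, b⟩ hm hm'
    simp only [mem_union, mem_image, mem_range, Prod.mk.injEq] at hm hm'
    obtain ⟨t', ht', g1, g2⟩ := hm'
    rcases hm with (⟨t, ht, h1, h2⟩ | ⟨t, ht, h1, h2⟩) <;> omega
  have d4 : Disjoint ((((range (l-i)).image (fun t => (k+l-i, i+t)))
      ∪ ((range (k-i)).image (fun t => (l+t, i))))
      ∪ ((range (l-i)).image (fun t => (i+t, l-t))))
      ((range (k-i)).image (fun t => (i, l+1+t))) := by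
    rw [Finset.disjoint_left]
    rintro ⟨a, b⟩ hm hm'
    simp only [mem_union, mem_image, mem_range, Prod.mk.injEq] at hm hm'
    obtain ⟨t', ht', g1, g2⟩ := hm'
    rcases hm with ((⟨t, ht, h1, h2⟩ | ⟨t, ht, h1, h2⟩) | ⟨t, ht, h1, h2⟩) <;> omega
  have d5 : Disjoint (((((range (l-i)).image (fun t => (k+l-i, i+t)))
      ∪ ((range (k-i)).image (fun t => (l+t, i))))
      ∪ ((range (l-i)).image (fun t => (i+t, l-t))))
      ∪ ((range (k-i)).image (fun t => (i, l+1+t))))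
      ((range (l-i)).image (fun t => (i+1+t, k+l-i))) := by
    rw [Finset.disjoint_left]
    rintro ⟨a, b⟩ hm hm'
    simp only [mem_union, mem_image, mem_range, Prod.mk.injEq] at hm hm'
    obtain ⟨t', ht', g1, g2⟩ := hm'
    rcases hm with (((⟨t, ht, h1, h2⟩ | ⟨t, ht, h1, h2⟩) | ⟨t, ht, h1, h2⟩) | ⟨t, ht, h1, h2⟩) <;> omega
  have d6 : Disjoint ((((((range (l-i)).image (fun t => (k+l-i, i+t)))
      ∪ ((range (k-i)).image (fun t => (l+t, i))))
      ∪ ((range (l-i)).image (fun t => (i+t, l-t))))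
      ∪ ((range (k-i)).image (fun t => (i, l+1+t))))
      ∪ ((range (l-i)).image (fun t => (i+1+t, k+l-i))))
      ((range (k-i)).image (fun t => (l+1+t, k+l-i-1-t))) := by
    rw [Finset.disjoint_left]
    rintro ⟨a, b⟩ hm hm'
    simp only [mem_union, mem_image, mem_range, Prod.mk.injEq] at hm hm'
    obtain ⟨t', ht', g1, g2⟩ := hm'
    rcases hm with ((((⟨t, ht, h1, h2⟩ | ⟨t, ht, h1, h2⟩) | ⟨t, ht, h1, h2⟩) | ⟨t, ht, h1, h2⟩) | ⟨t, ht, h1, h2⟩) <;> omega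
  rw [hexBoundaryLayer_eq k l i hkl hil, Finset.sum_union d6, Finset.sum_union d5,
    Finset.sum_union d4, Finset.sum_union d3, Finset.sum_union d2]
  rw [Finset.sum_image (fun x _ y _ hxy => by
        simp only [Prod.mk.injEq] at hxy; omega),
      Finset.sum_image (fun x _ y _ hxy => by
        simp only [Prod.mk.injEq] at hxy; omega),
      Finset.sum_image (fun x _ y _ hxy => by
        simp only [Prod.mk.injEq] at hxy; omega),
      Finset.sum_image (fun x _ y _ hxy => by
        simp only [Prod.mk.injEq] at hxy; omega),
      Finset.sum_image (fun x _ y _ hxy => by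
        simp only [Prod.mk.injEq] at hxy; omega),
      Finset.sum_image (fun x _ y _ hxy => by
        simp only [Prod.mk.injEq] at hxy; omega)]
  simp only
  have S1 : ∑ t ∈ range (l-i), Hab x1 x2 x3 ((k+l-i : ℕ) : ℤ) ((i+t : ℕ) : ℤ)
      = Pb x1 x2 x3 ((k:ℤ)+l-i) ((l:ℤ)-1) - Pb x1 x2 x3 ((k:ℤ)+l-i) ((i:ℤ)-1) := by
    refine (sum_step (fun u => Pb x1 x2 x3 ((k:ℤ)+l-i) ((i:ℤ)-1+u)) _ fun t ht => ?_).trans ?_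
    · have h1 : ((k+l-i : ℕ) : ℤ) = (k:ℤ)+l-i := by omega
      have h2 : ((i+t : ℕ) : ℤ) = (i:ℤ)+t := by omega
      rw [h1, h2, Hab_Pb]; push_cast; ring_nf
    · have h3 : ((l-i : ℕ) : ℤ) = (l:ℤ)-i := by omega
      rw [h3]; try norm_num
      try ring_nf
  have S2 : ∑ t ∈ range (k-i), Hab x1 x2 x3 ((l+t : ℕ) : ℤ) ((i : ℕ) : ℤ)
      = Pa x1 x2 x3 ((k:ℤ)+l-i-1) (i:ℤ) - Pa x1 x2 x3 ((l:ℤ)-1) (i:ℤ) := by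
    refine (sum_step (fun u => Pa x1 x2 x3 ((l:ℤ)-1+u) (i:ℤ)) _ fun t ht => ?_).trans ?_
    · have h2 : ((l+t : ℕ) : ℤ) = (l:ℤ)+t := by omega
      rw [h2, Hab_Pa]; push_cast; ring_nf
    · have h3 : ((k-i : ℕ) : ℤ) = (k:ℤ)-i := by omega
      rw [h3]; try norm_num
      try ring_nf
  have S3 : ∑ t ∈ range (l-i), Hab x1 x2 x3 ((i+t : ℕ) : ℤ) ((l-t : ℕ) : ℤ)
      = Pd x1 x2 x3 ((l:ℤ)+i) ((l:ℤ)-1) - Pd x1 x2 x3 ((l:ℤ)+i) ((i:ℤ)-1) := by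
    refine (sum_step (fun u => Pd x1 x2 x3 ((l:ℤ)+i) ((i:ℤ)-1+u)) _ fun t ht => ?_).trans ?_
    · simp only [mem_range] at ht
      have h1 : ((i+t : ℕ) : ℤ) = (i:ℤ)+t := by omega
      have h2 : ((l-t : ℕ) : ℤ) = (l:ℤ)-t := by omega
      rw [h1, h2, Hab_Pd]
      have h4 : ((i:ℤ)+t) + ((l:ℤ)-t) = (l:ℤ)+i := by ring
      rw [h4]; push_cast; ring_nf
    · have h3 : ((l-i : ℕ) : ℤ) = (l:ℤ)-i := by omega
      rw [h3]; try norm_num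
      try ring_nf
  have S4 : ∑ t ∈ range (k-i), Hab x1 x2 x3 ((i : ℕ) : ℤ) ((l+1+t : ℕ) : ℤ)
      = Pb x1 x2 x3 (i:ℤ) ((k:ℤ)+l-i) - Pb x1 x2 x3 (i:ℤ) (l:ℤ) := by
    refine (sum_step (fun u => Pb x1 x2 x3 (i:ℤ) ((l:ℤ)+u)) _ fun t ht => ?_).trans ?_
    · have h2 : ((l+1+t : ℕ) : ℤ) = (l:ℤ)+1+t := by omega
      rw [h2, Hab_Pb]; push_cast; ring_nf
    · have h3 : ((k-i : ℕ) : ℤ) = (k:ℤ)-i := by omega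
      rw [h3]; try norm_num
      try ring_nf
  have S5 : ∑ t ∈ range (l-i), Hab x1 x2 x3 ((i+1+t : ℕ) : ℤ) ((k+l-i : ℕ) : ℤ)
      = Pa x1 x2 x3 (l:ℤ) ((k:ℤ)+l-i) - Pa x1 x2 x3 (i:ℤ) ((k:ℤ)+l-i) := by
    refine (sum_step (fun u => Pa x1 x2 x3 ((i:ℤ)+u) ((k:ℤ)+l-i)) _ fun t ht => ?_).trans ?_
    · have h1 : ((i+1+t : ℕ) : ℤ) = (i:ℤ)+1+t := by omega
      have h2 : ((k+l-i : ℕ) : ℤ) = (k:ℤ)+l-i := by omega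
      rw [h1, h2, Hab_Pa]; push_cast; ring_nf
    · have h3 : ((l-i : ℕ) : ℤ) = (l:ℤ)-i := by omega
      rw [h3]; try norm_num
      try ring_nf
  have S6 : ∑ t ∈ range (k-i), Hab x1 x2 x3 ((l+1+t : ℕ) : ℤ) ((k+l-i-1-t : ℕ) : ℤ)
      = Pd x1 x2 x3 ((k:ℤ)+2*l-i) ((k:ℤ)+l-i) - Pd x1 x2 x3 ((k:ℤ)+2*l-i) (l:ℤ) := by
    refine (sum_step (fun u => Pd x1 x2 x3 ((k:ℤ)+2*l-i) ((l:ℤ)+u)) _ fun t ht => ?_).trans ?_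
    · simp only [mem_range] at ht
      have h1 : ((l+1+t : ℕ) : ℤ) = (l:ℤ)+1+t := by omega
      have h2 : ((k+l-i-1-t : ℕ) : ℤ) = (k:ℤ)+l-i-1-t := by omega
      rw [h1, h2, Hab_Pd]
      have h4 : ((l:ℤ)+1+t) + ((k:ℤ)+l-i-1-t) = (k:ℤ)+2*l-i := by ring
      rw [h4]; push_cast; ring_nf
    · have h3 : ((k-i : ℕ) : ℤ) = (k:ℤ)-i := by omega
      rw [h3]; try norm_num
      try ring_nf
  rw [S1, S2, S3, S4, S5, S6]
  exact final_id x1 x2 x3 (k:ℤ) (l:ℤ) (i:ℤ)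
end

section
/- For all nonnegative integers k, l and writing χ_{α,β} = (x₂^{α+1}−x₂^{−(α+1)})(x₁^{β+1}−x₁^{−(β+1)})/((x₁−x₁^{−1})(x₂−x₂^{−1})) for the D₂ character, the identity χ_{k,k+l+1} − χ_{k+l+1,k} = Σ_{r=0}^{k} Σ_{s=0}^{l} (χ_{0,1} − χ_{1,0})·χ_{r+s,r+l−s} holds in ℤ[x₁^{±1},x₂^{±1}]. -/
open Finset

/-! Since `χ_{0,1} = x₁ + x₁⁻¹` and `χ_{1,0} = x₂ + x₂⁻¹`, the recurrence
`(x + x⁻¹)(xⁿ - x⁻ⁿ) = (xⁿ⁺¹ - x⁻ⁿ⁻¹) + (xⁿ⁻¹ - x⁻ⁿ⁺¹)` turns multiplication by `χ_{0,1} - χ_{1,0}`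
into the discrete wave operator `ψ(a,b+1) + ψ(a,b-1) - ψ(a+1,b) - ψ(a-1,b)` on the weights.
Summed over a rectangle in the characteristic coordinates `(a,b) = (r+s, r+l-s)`, the wave operator
telescopes in `s` and then in `r`, leaving the corner values `χ_{k,k+l+1} - χ_{k+l+1,k}` and a term
of weight `-1`, which vanishes. -/

/-- The character of the irreducible `D₂`-representation of highest weight `(α,β)`:
`χ_{α,β} = (x₂^{α+1}-x₂^{-(α+1)})(x₁^{β+1}-x₁^{-(β+1)}) / ((x₁-x₁⁻¹)(x₂-x₂⁻¹))`. -/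
noncomputable def chiD2 {F : Type*} [Field F] (x1 x2 : F) (α β : ℕ) : F :=
  (x2 ^ (α + 1) - x2⁻¹ ^ (α + 1)) * (x1 ^ (β + 1) - x1⁻¹ ^ (β + 1))
    / ((x1 - x1⁻¹) * (x2 - x2⁻¹))

section WaveOperator

variable {G : Type*} [AddCommGroup G]

def discreteWave (ψ : ℤ → ℤ → G) (a b : ℤ) : G :=
  ψ a (b + 1) + ψ a (b - 1) - ψ (a + 1) b - ψ (a - 1) b

theorem sum_range_discreteWave (ψ : ℤ → ℤ → G) (r : ℤ) (l : ℕ) :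
    ∑ s ∈ range (l + 1), discreteWave ψ (r + s) (r + l - s)
      = (ψ r (r + l + 1) - ψ (r + l + 1) r) - (ψ (r - 1) (r + l) - ψ (r + l) (r - 1)) := by
  set g : ℕ → G := fun s => ψ (r + s) (r + l + 1 - s)
  set h : ℕ → G := fun s => ψ (r + s - 1) (r + l - s)
  have hsplit : ∀ s : ℕ,
      discreteWave ψ (r + s) (r + l - s) = (g s - g (s + 1)) + (h (s + 1) - h s) := by
    intro s
    simp only [discreteWave, g, h]
    push_cast
    ring_nf
    abel
  rw [sum_congr rfl fun s _ => hsplit s, sum_add_distrib, sum_range_sub', sum_range_sub]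
  simp only [g, h]
  push_cast
  ring_nf
  abel

theorem sum_range_sum_range_discreteWave (ψ : ℤ → ℤ → G) (k l : ℕ) :
    ∑ r ∈ range (k + 1), ∑ s ∈ range (l + 1), discreteWave ψ (r + s) (r + l - s)
      = (ψ k (k + l + 1) - ψ (k + l + 1) k) - (ψ (-1) l - ψ l (-1)) := by
  set Φ : ℕ → G := fun r => ψ (r - 1) (r + l) - ψ (r + l) (r - 1)
  have hstep : ∀ r : ℕ,
      ∑ s ∈ range (l + 1), discreteWave ψ (r + s) (r + l - s) = Φ (r + 1) - Φ r := by
    intro r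
    rw [sum_range_discreteWave]
    simp only [Φ]
    push_cast
    ring_nf
  rw [sum_congr rfl fun r _ => hstep r, sum_range_sub]
  simp only [Φ]
  push_cast
  ring_nf

end WaveOperator

section Characters

variable {F : Type*} [Field F]

theorem add_inv_mul_zpow_sub_inv_zpow {x : F} (hx : x ≠ 0) (n : ℤ) :
    (x + x⁻¹) * (x ^ n - x⁻¹ ^ n)
      = (x ^ (n + 1) - x⁻¹ ^ (n + 1)) + (x ^ (n - 1) - x⁻¹ ^ (n - 1)) := by
  rw [zpow_add_one₀ hx, zpow_sub_one₀ hx, zpow_add_one₀ (inv_ne_zero hx),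
    zpow_sub_one₀ (inv_ne_zero hx), inv_inv]
  ring

noncomputable def chiD2Int (x1 x2 : F) (a b : ℤ) : F :=
  (x2 ^ (a + 1) - x2⁻¹ ^ (a + 1)) * (x1 ^ (b + 1) - x1⁻¹ ^ (b + 1))
    / ((x1 - x1⁻¹) * (x2 - x2⁻¹))

theorem chiD2Int_natCast (x1 x2 : F) (α β : ℕ) : chiD2Int x1 x2 α β = chiD2 x1 x2 α β := by
  simp only [chiD2Int, chiD2]
  norm_cast

theorem chiD2Int_neg_one_left (x1 x2 : F) (b : ℤ) : chiD2Int x1 x2 (-1) b = 0 := by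
  simp [chiD2Int]

theorem chiD2Int_neg_one_right (x1 x2 : F) (a : ℤ) : chiD2Int x1 x2 a (-1) = 0 := by
  simp [chiD2Int]

theorem chiD2_zero_one_sub_chiD2_one_zero {x1 x2 : F}
    (h1 : x1 - x1⁻¹ ≠ 0) (h2 : x2 - x2⁻¹ ≠ 0) :
    chiD2 x1 x2 0 1 - chiD2 x1 x2 1 0 = (x1 + x1⁻¹) - (x2 + x2⁻¹) := by
  rw [chiD2, chiD2, div_sub_div_same, div_eq_iff (mul_ne_zero h1 h2)]
  ring

theorem mul_chiD2Int_eq_discreteWave {x1 x2 : F} (hx1 : x1 ≠ 0) (hx2 : x2 ≠ 0) (a b : ℤ) :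
    ((x1 + x1⁻¹) - (x2 + x2⁻¹)) * chiD2Int x1 x2 a b = discreteWave (chiD2Int x1 x2) a b := by
  have e1 := add_inv_mul_zpow_sub_inv_zpow hx1 (b + 1)
  have e2 := add_inv_mul_zpow_sub_inv_zpow hx2 (a + 1)
  simp only [add_sub_cancel_right] at e1 e2
  simp only [discreteWave, chiD2Int, sub_add_cancel]
  linear_combination
    (x2 ^ (a + 1) - x2⁻¹ ^ (a + 1)) / ((x1 - x1⁻¹) * (x2 - x2⁻¹)) * e1
      - (x1 ^ (b + 1) - x1⁻¹ ^ (b + 1)) / ((x1 - x1⁻¹) * (x2 - x2⁻¹)) * e2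

end Characters

theorem b2_d2_character_identity_general {F : Type*} [Field F] (x1 x2 : F)
    (h1 : x1 - x1⁻¹ ≠ 0) (h2 : x2 - x2⁻¹ ≠ 0) (k l : ℕ) :
    chiD2 x1 x2 k (k + l + 1) - chiD2 x1 x2 (k + l + 1) k
      = ∑ r ∈ range (k + 1), ∑ s ∈ range (l + 1),
          (chiD2 x1 x2 0 1 - chiD2 x1 x2 1 0) * chiD2 x1 x2 (r + s) (r + l - s) := by
  have hx1 : x1 ≠ 0 := fun h ↦ h1 (by simp [h])
  have hx2 : x2 ≠ 0 := fun h ↦ h2 (by simp [h])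
  have hterm : ∀ r s : ℕ, s ∈ range (l + 1) →
      (chiD2 x1 x2 0 1 - chiD2 x1 x2 1 0) * chiD2 x1 x2 (r + s) (r + l - s)
        = discreteWave (chiD2Int x1 x2) (r + s) (r + l - s) := by
    intro r s hs
    have hsl : s ≤ r + l := by have := mem_range_succ_iff.mp hs; omega
    rw [chiD2_zero_one_sub_chiD2_one_zero h1 h2, ← chiD2Int_natCast,
      mul_chiD2Int_eq_discreteWave hx1 hx2]
    push_cast [hsl]
    rfl
  rw [sum_congr rfl fun r _ => sum_congr rfl (hterm r), sum_range_sum_range_discreteWave]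
  rw [chiD2Int_neg_one_left, chiD2Int_neg_one_right, sub_zero, sub_zero]
  simp only [← chiD2Int_natCast]
  push_cast
  rfl

/-- The character identity proving the `B₂ → D₂` branching rule:
`χ_{k,k+l+1} - χ_{k+l+1,k} = Σ_{r=0}^{k} Σ_{s=0}^{l} (χ_{0,1} - χ_{1,0})·χ_{r+s,r+l-s}`. -/
theorem b2_d2_character_identity {F : Type*} [Field F] (x1 x2 : F)
    (hx1 : x1 ≠ 0) (hx2 : x2 ≠ 0)
    (h1 : x1 - x1⁻¹ ≠ 0) (h2 : x2 - x2⁻¹ ≠ 0) (k l : ℕ) :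
    chiD2 x1 x2 k (k + l + 1) - chiD2 x1 x2 (k + l + 1) k
      = ∑ r ∈ range (k + 1), ∑ s ∈ range (l + 1),
          (chiD2 x1 x2 0 1 - chiD2 x1 x2 1 0) * chiD2 x1 x2 (r + s) (r + l - s) :=
  b2_d2_character_identity_general x1 x2 h1 h2 k l
end

section
/- For all nonnegative integers k, l, the weighted dimension sum over the hexagon equals the G₂ dimension: Σ_{(α,β)∈H(k,l)} n_{α,β}·(α+1)(β+1)(α+β+2)/2 = (k+1)(k+l+2)(2k+3l+5)(k+2l+3)(k+3l+4)(l+1)/120. -/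
open Finset

set_option maxHeartbeats 2000000

def Fq (n u p q : ℚ) : ℚ :=
  (1/12 : ℚ) * n * u + (-1/4 : ℚ) * n * u * q + (-1/4 : ℚ) * n * u * p + (1/2 : ℚ) * n * u * p * q + (-1/4 : ℚ) * n^2 * u + (1/4 : ℚ) * n^2 * u * q + (1/4 : ℚ) * n^2 * u * p + (1/6 : ℚ) * n^3 * u

def PA (C D J m : ℚ) : ℚ :=
  (11/60 : ℚ) * m + (13/24 : ℚ) * m^2 + (1/3 : ℚ) * m^3 + (-1/24 : ℚ) * m^4 + (-1/60 : ℚ) * m^5 + (11/12 : ℚ) * J * m + (19/12 : ℚ) * J * m^2 + (7/12 : ℚ) * J * m^3 + (-1/12 : ℚ) * J * m^4 + (5/4 : ℚ) * J^2 * m + (3/2 : ℚ) * J^2 * m^2 + (1/4 : ℚ) * J^2 * m^3 + (1/2 : ℚ) * J^3 * m + (1/2 : ℚ) * J^3 * m^2 + (1/4 : ℚ) * D * m + (3/4 : ℚ) * D * m^2 + (1/2 : ℚ) * D * m^3 + (1 : ℚ) * D * J * m + (3/2 : ℚ) * D * J * m^2 + (1/2 : ℚ) * D * J * m^3 + (3/4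 : ℚ) * D * J^2 * m + (3/4 : ℚ) * D * J^2 * m^2 + (1/12 : ℚ) * D^2 * m + (1/4 : ℚ) * D^2 * m^2 + (1/6 : ℚ) * D^2 * m^3 + (1/4 : ℚ) * D^2 * J * m + (1/4 : ℚ) * D^2 * J * m^2 + (2/3 : ℚ) * C * m + (11/12 : ℚ) * C * m^2 + (1/4 : ℚ) * C * m^3 + (8/3 : ℚ) * C * J * m + (7/4 : ℚ) * C * J * m^2 + (1/6 : ℚ) * C * J * m^3 + (3 : ℚ) * C * J^2 * m + (3/4 : ℚ) * C * J^2 * m^2 + (1 : ℚ) * C * J^3 * m + (5/6 : ℚ) * C * D * m + (1 : ℚ) * C * D * m^2 + (1/6 : ℚ) * C * D * m^3 + (5/2 : ℚ) * C * D * J * m + (1 : ℚ) * C * D * J * m^2 + (3/2 : ℚ) * C * D * J^2 * m + (1/4 : ℚ) * C * D^2 * m + (1/4 : ℚ) * C * D^2 * m^2 + (1/2 : ℚ) * C * D^2 * J * m + (5/12 : ℚ) * C^2 * m + (1/2 : ℚ) * C^2 * m^2 + (1/12 : ℚ) * C^2 * m^3 + (5/4 : ℚ) * C^2 * J * m + (1/2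 : ℚ) * C^2 * J * m^2 + (3/4 : ℚ) * C^2 * J^2 * m + (1/4 : ℚ) * C^2 * D * m + (1/4 : ℚ) * C^2 * D * m^2 + (1/2 : ℚ) * C^2 * D * J * m + (1/12 : ℚ) * C^3 * m + (1/12 : ℚ) * C^3 * m^2 + (1/6 : ℚ) * C^3 * J * m

def PB (C D J m : ℚ) : ℚ :=
  (13/20 : ℚ) * m + (-5/8 : ℚ) * m^2 + (-1/6 : ℚ) * m^3 + (1/8 : ℚ) * m^4 + (1/60 : ℚ) * m^5 + (23/12 : ℚ) * J * m + (-19/12 : ℚ) * J * m^2 + (-5/12 : ℚ) * J * m^3 + (1/12 : ℚ) * J * m^4 + (7/4 : ℚ) * J^2 * m + (-3/2 : ℚ) * J^2 * m^2 + (-1/4 : ℚ) * J^2 * m^3 + (1/2 : ℚ) * J^3 * m + (-1/2 : ℚ) * J^3 * m^2 + (31/12 : ℚ) * D * m + (-7/6 : ℚ) * D * m^2 + (-1/3 : ℚ) * D * m^3 + (1/12 : ℚ) * D * m^4 + (37/6 : ℚ) * D * J * m + (-7/4 : ℚ) * D * J * m^2 + (-1/3 : ℚ) * D * J * m^3 +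 (9/2 : ℚ) * D * J^2 * m + (-3/4 : ℚ) * D * J^2 * m^2 + (1 : ℚ) * D * J^3 * m + (7/2 : ℚ) * D^2 * m + (-3/4 : ℚ) * D^2 * m^2 + (-1/6 : ℚ) * D^2 * m^3 + (23/4 : ℚ) * D^2 * J * m + (-1/2 : ℚ) * D^2 * J * m^2 + (9/4 : ℚ) * D^2 * J^2 * m + (2 : ℚ) * D^3 * m + (-1/6 : ℚ) * D^3 * m^2 + (5/3 : ℚ) * D^3 * J * m + (5/12 : ℚ) * D^4 * m + (23/12 : ℚ) * C * m + (-1/3 : ℚ) * C * m^2 + (-5/12 : ℚ) * C * m^3 + (14/3 : ℚ) * C * J * m + (-1/4 : ℚ) * C * J * m^2 + (-1/3 : ℚ) * C * J * m^3 + (15/4 : ℚ) * C * J^2 * m + (1 : ℚ) * C * J^3 * m + (14/3 : ℚ) * C * D * m + (-1/4 : ℚ) * C * D * m^2 + (-1/3 : ℚ) * C * D * m^3 + (15/2 : ℚ) * C * D * J * m + (3 : ℚ) * C * D * J^2 * m + (15/4 : ℚ) * C * D^2 * m + (3 : ℚ) * C * D^2 * J * m + (1 : ℚ) * C * D^3 *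 m + (4/3 : ℚ) * C^2 * m + (1/4 : ℚ) * C^2 * m^2 + (-1/12 : ℚ) * C^2 * m^3 + (2 : ℚ) * C^2 * J * m + (1/4 : ℚ) * C^2 * J * m^2 + (3/4 : ℚ) * C^2 * J^2 * m + (2 : ℚ) * C^2 * D * m + (1/4 : ℚ) * C^2 * D * m^2 + (3/2 : ℚ) * C^2 * D * J * m + (3/4 : ℚ) * C^2 * D^2 * m + (1/4 : ℚ) * C^3 * m + (1/12 : ℚ) * C^3 * m^2 + (1/6 : ℚ) * C^3 * J * m + (1/6 : ℚ) * C^3 * D * m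

def PJ (K L m : ℚ) : ℚ :=
  (3 : ℚ) * m + (-3 : ℚ) * m^2 + (1 : ℚ) * m^3 + (109/12 : ℚ) * L * m + (-23/3 : ℚ) * L * m^2 + (13/6 : ℚ) * L * m^3 + (-1/12 : ℚ) * L * m^4 + (1/60 : ℚ) * L * m^5 + (32/3 : ℚ) * L^2 * m + (-29/4 : ℚ) * L^2 * m^2 + (3/2 : ℚ) * L^2 * m^3 + (-1/24 : ℚ) * L^2 * m^4 + (6 : ℚ) * L^3 * m + (-3 : ℚ) * L^3 * m^2 + (1/3 : ℚ) * L^3 * m^3 + (19/12 : ℚ) * L^4 * m + (-11/24 : ℚ) * L^4 * m^2 + (3/20 : ℚ) * L^5 * m + (71/12 : ℚ) * K * m + (-13/3 : ℚ) * K * m^2 + (5/6 : ℚ) * K * m^3 + (1/12 : ℚ) * K * m^4 + (-1/60 : ℚ) * K * m^5 + (15 : ℚ) * K * L * m + (-17/2 : ℚ) * K * L * m^2 + (4/3 : ℚ) * K * L * m^3 + (14 : ℚ) * K * L^2 * m + (-11/2 : ℚ) * K * L^2 * m^2 + (1/2 : ℚ) * K * L^2 * m^3 + (17/3 : ℚ)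 * K * L^3 * m + (-7/6 : ℚ) * K * L^3 * m^2 + (5/6 : ℚ) * K * L^4 * m + (13/3 : ℚ) * K^2 * m + (-9/4 : ℚ) * K^2 * m^2 + (1/6 : ℚ) * K^2 * m^3 + (1/24 : ℚ) * K^2 * m^4 + (17/2 : ℚ) * K^2 * L * m + (-3 : ℚ) * K^2 * L * m^2 + (1/6 : ℚ) * K^2 * L * m^3 + (11/2 : ℚ) * K^2 * L^2 * m + (-1 : ℚ) * K^2 * L^2 * m^2 + (7/6 : ℚ) * K^2 * L^3 * m + (3/2 : ℚ) * K^3 * m + (-1/2 : ℚ) * K^3 * m^2 + (2 : ℚ) * K^3 * L * m + (-1/3 : ℚ) * K^3 * L * m^2 + (2/3 : ℚ) * K^3 * L^2 * m + (1/4 : ℚ) * K^4 * m + (-1/24 : ℚ) * K^4 * m^2 + (1/6 : ℚ) * K^4 * L * m + (1/60 : ℚ) * K^5 * m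


lemma zadd {x y z : ℚ} (h : x = 0) (h2 : y = z) : x + y = z := by rw [h, h2, zero_add]

lemma addz {x y z : ℚ} (h : y = 0) (h2 : x = z) : x + y = z := by rw [h, h2, add_zero]

lemma sum_range_add' (f : ℕ → ℚ) (m n : ℕ) :
    ∑ i ∈ range (m + n), f i = (∑ i ∈ range m, f i) + ∑ i ∈ range n, f (m + i) := by
  induction n with
  | zero => simp
  | succ n ih =>
      rw [show m + (n + 1) = (m + n) + 1 by omega, sum_range_succ, ih, sum_range_succ, add_assoc]

lemma sum_ite_le (n M : ℕ) :
    (∑ j ∈ range n, if j ≤ M then (1 : ℚ) else 0) = ((min n (M + 1) : ℕ) : ℚ) := by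
  induction n with
  | zero => simp
  | succ n ih =>
      rw [sum_range_succ, ih]
      by_cases h : n ≤ M
      · rw [if_pos h, show min (n + 1) (M + 1) = min n (M + 1) + 1 by omega]
        push_cast
        ring
      · rw [if_neg h, show min (n + 1) (M + 1) = min n (M + 1) by omega, add_zero]

lemma hexWeight_eq (k l α β : ℕ) :
    (hexWeight k l α β : ℚ) =
      ∑ j ∈ range (min k l + 1),
        (if j ≤ α ∧ j ≤ β ∧ l + j ≤ α + β ∧ α + β + j ≤ k + 2 * l ∧ α + j ≤ k + l ∧
            β + j ≤ k + l then (1 : ℚ) else 0) := by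
  by_cases h : l ≤ α + β ∧ α + β ≤ k + 2 * l ∧ α ≤ k + l ∧ β ≤ k + l
  · have hM : ∀ j ∈ range (min k l + 1),
        (if j ≤ α ∧ j ≤ β ∧ l + j ≤ α + β ∧ α + β + j ≤ k + 2 * l ∧ α + j ≤ k + l ∧
            β + j ≤ k + l then (1 : ℚ) else 0)
          = (if j ≤ min (min (min α β) (min (k + l - α) (k + l - β)))
                (min (α + β - l) (k + 2 * l - (α + β))) then (1 : ℚ) else 0) := by
      intro j _
      exact if_congr (by omega) rfl rfl
    rw [sum_congr rfl hM, sum_ite_le]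
    rw [hexWeight, if_pos h]
    exact Nat.cast_inj.mpr (by omega)
  · rw [hexWeight, if_neg h, Nat.cast_zero]
    symm
    apply sum_eq_zero
    intro j _
    split
    · next hc => exact absurd (show l ≤ α + β ∧ α + β ≤ k + 2 * l ∧ α ≤ k + l ∧ β ≤ k + l
        by omega) h
    · rfl

lemma qsum (n : ℕ) (u p q : ℚ) :
    ∑ t ∈ range n, u * ((t : ℚ) + p) * ((t : ℚ) + q) / 2 = Fq n u p q := by
  induction n with
  | zero => simp only [range_zero, sum_empty, Fq]; push_cast; ring
  | succ n ih => rw [sum_range_succ, ih]; simp only [Fq]; push_cast; ring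

lemma pasum (m : ℕ) (C D J : ℚ) :
    ∑ a ∈ range m,
        Fq (C + (a : ℚ) + 1) (J + (a : ℚ) + 1) (D - (a : ℚ) + J + 1) (D + 2 * J + 2)
      = PA C D J m := by
  induction m with
  | zero => simp only [range_zero, sum_empty, Fq, PA]; push_cast; ring
  | succ m ih => rw [sum_range_succ, ih]; simp only [Fq, PA]; push_cast; ring

lemma pbsum (m : ℕ) (C D J : ℚ) :
    ∑ e ∈ range m,
        Fq (C + D - (e : ℚ)) (D + (e : ℚ) + J + 2) (J + 1) (D + (e : ℚ) + 2 * J + 3)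
      = PB C D J m := by
  induction m with
  | zero => simp only [range_zero, sum_empty, Fq, PB]; push_cast; ring
  | succ m ih => rw [sum_range_succ, ih]; simp only [Fq, PB]; push_cast; ring

lemma pjsum (m : ℕ) (K L : ℚ) :
    ∑ j ∈ range m,
        (PA (K - (j : ℚ)) (L - (j : ℚ)) (j : ℚ) (L - (j : ℚ) + 1)
          + PB (K - (j : ℚ)) (L - (j : ℚ)) (j : ℚ) (K - (j : ℚ)))
      = PJ K L m := by
  induction m with
  | zero => simp only [range_zero, sum_empty, PA, PB, PJ]; push_cast; ring
  | succ m ih => rw [sum_range_succ, ih]; simp only [PA, PB, PJ]; push_cast; ring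

lemma hexEval (c d j : ℕ) :
    (∑ a ∈ range (c + d + 1), ∑ b ∈ range (c + d + 1),
        if d ≤ a + b ∧ a + b ≤ c + 2 * d then
          ((a : ℚ) + (j : ℚ) + 1) * ((b : ℚ) + (j : ℚ) + 1)
            * ((a : ℚ) + (b : ℚ) + 2 * (j : ℚ) + 2) / 2
        else 0)
      = PA (c : ℚ) (d : ℚ) (j : ℚ) ((d : ℚ) + 1) + PB (c : ℚ) (d : ℚ) (j : ℚ) (c : ℚ) := by
  rw [show c + d + 1 = (d + 1) + c by omega, sum_range_add']
  congr 1
  · -- region A : a ≤ d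
    calc (∑ a ∈ range (d + 1), ∑ b ∈ range (d + 1 + c),
            if d ≤ a + b ∧ a + b ≤ c + 2 * d then
              ((a : ℚ) + (j : ℚ) + 1) * ((b : ℚ) + (j : ℚ) + 1)
                * ((a : ℚ) + (b : ℚ) + 2 * (j : ℚ) + 2) / 2
            else 0)
        = ∑ a ∈ range (d + 1),
            Fq ((c : ℚ) + (a : ℚ) + 1) ((j : ℚ) + (a : ℚ) + 1)
              ((d : ℚ) - (a : ℚ) + (j : ℚ) + 1) ((d : ℚ) + 2 * (j : ℚ) + 2) := by
          apply sum_congr rfl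
          intro a ha
          have ha' : a ≤ d := by
            have := mem_range.mp ha
            omega
          have hsub : ((d - a : ℕ) : ℚ) = (d : ℚ) - (a : ℚ) := by
            push_cast [Nat.cast_sub ha']
            ring
          rw [show d + 1 + c = (d - a) + (c + a + 1) by omega, sum_range_add']
          refine zadd (sum_eq_zero fun b hb => ?_) ?_
          · have := mem_range.mp hb
            exact if_neg (by omega)
          calc (∑ t ∈ range (c + a + 1),
                  if d ≤ a + ((d - a) + t) ∧ a + ((d - a) + t) ≤ c + 2 * d then
                    ((a : ℚ) + (j : ℚ) + 1) * ((((d - a) + t : ℕ) : ℚ) + (j : ℚ) + 1)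
                      * ((a : ℚ) + (((d - a) + t : ℕ) : ℚ) + 2 * (j : ℚ) + 2) / 2
                  else 0)
              = ∑ t ∈ range (c + a + 1),
                  ((j : ℚ) + (a : ℚ) + 1) * ((t : ℚ) + ((d : ℚ) - (a : ℚ) + (j : ℚ) + 1))
                    * ((t : ℚ) + ((d : ℚ) + 2 * (j : ℚ) + 2)) / 2 := by
                apply sum_congr rfl
                intro t ht
                have := mem_range.mp ht
                rw [if_pos (by omega)]
                push_cast [hsub]
                ring
            _ = Fq ((c + a + 1 : ℕ) : ℚ) ((j : ℚ) + (a : ℚ) + 1)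
                  ((d : ℚ) - (a : ℚ) + (j : ℚ) + 1) ((d : ℚ) + 2 * (j : ℚ) + 2) :=
                qsum _ _ _ _
            _ = Fq ((c : ℚ) + (a : ℚ) + 1) ((j : ℚ) + (a : ℚ) + 1)
                  ((d : ℚ) - (a : ℚ) + (j : ℚ) + 1) ((d : ℚ) + 2 * (j : ℚ) + 2) := by
                norm_num
      _ = PA (c : ℚ) (d : ℚ) (j : ℚ) (((d + 1 : ℕ)) : ℚ) := pasum (d + 1) _ _ _
      _ = PA (c : ℚ) (d : ℚ) (j : ℚ) ((d : ℚ) + 1) := by norm_num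
  · -- region B : a = d + 1 + e
    calc (∑ e ∈ range c, ∑ b ∈ range (d + 1 + c),
            if d ≤ (d + 1 + e) + b ∧ (d + 1 + e) + b ≤ c + 2 * d then
              (((d + 1 + e : ℕ) : ℚ) + (j : ℚ) + 1) * ((b : ℚ) + (j : ℚ) + 1)
                * (((d + 1 + e : ℕ) : ℚ) + (b : ℚ) + 2 * (j : ℚ) + 2) / 2
            else 0)
        = ∑ e ∈ range c,
            Fq ((c : ℚ) + (d : ℚ) - (e : ℚ)) ((d : ℚ) + (e : ℚ) + (j : ℚ) + 2)
              ((j : ℚ) + 1) ((d : ℚ) + (e : ℚ) + 2 * (j : ℚ) + 3) := by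
          apply sum_congr rfl
          intro e he
          have he' : e < c := mem_range.mp he
          have hsub : ((c + d - e : ℕ) : ℚ) = (c : ℚ) + (d : ℚ) - (e : ℚ) := by
            push_cast [Nat.cast_sub (show e ≤ c + d by omega)]
            ring
          rw [show d + 1 + c = (c + d - e) + (e + 1) by omega, sum_range_add']
          refine addz (sum_eq_zero fun t ht => ?_) ?_
          · exact if_neg (by omega)
          calc (∑ b ∈ range (c + d - e),
                  if d ≤ (d + 1 + e) + b ∧ (d + 1 + e) + b ≤ c + 2 * d then
                    (((d + 1 + e : ℕ) : ℚ) + (j : ℚ) + 1) * ((b : ℚ) + (j : ℚ) + 1)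
                      * (((d + 1 + e : ℕ) : ℚ) + (b : ℚ) + 2 * (j : ℚ) + 2) / 2
                  else 0)
              = ∑ b ∈ range (c + d - e),
                  ((d : ℚ) + (e : ℚ) + (j : ℚ) + 2) * ((b : ℚ) + ((j : ℚ) + 1))
                    * ((b : ℚ) + ((d : ℚ) + (e : ℚ) + 2 * (j : ℚ) + 3)) / 2 := by
                apply sum_congr rfl
                intro b hb
                have := mem_range.mp hb
                rw [if_pos (by omega)]
                push_cast
                ring
            _ = Fq ((c + d - e : ℕ) : ℚ) ((d : ℚ) + (e : ℚ) + (j : ℚ) + 2)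
                  ((j : ℚ) + 1) ((d : ℚ) + (e : ℚ) + 2 * (j : ℚ) + 3) := qsum _ _ _ _
            _ = Fq ((c : ℚ) + (d : ℚ) - (e : ℚ)) ((d : ℚ) + (e : ℚ) + (j : ℚ) + 2)
                  ((j : ℚ) + 1) ((d : ℚ) + (e : ℚ) + 2 * (j : ℚ) + 3) := by rw [hsub]
      _ = PB (c : ℚ) (d : ℚ) (j : ℚ) ((c : ℕ) : ℚ) := pbsum c _ _ _

/-- Dimension check for the `G₂ → A₂` branching rule: the weighted sum of `sl₃` dimensions
over the hexagon equals the Weyl dimension of the irreducible `G₂`-representation of highest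
weight `k·ω₁ + l·ω₂`. -/
theorem g2_a2_dimension_identity (k l : ℕ) :
    (∑ α ∈ range (k + l + 1), ∑ β ∈ range (k + l + 1),
        (hexWeight k l α β : ℚ) * ((α + 1) * (β + 1) * (α + β + 2)) / 2)
      = ((k + 1) * (k + l + 2) * (2 * k + 3 * l + 5) * (k + 2 * l + 3) * (k + 3 * l + 4)
          * (l + 1) : ℚ) / 120 := by
  have step1 : ∀ α β : ℕ,
      (hexWeight k l α β : ℚ) * ((α + 1) * (β + 1) * (α + β + 2)) / 2
        = ∑ j ∈ range (min k l + 1),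
            (if j ≤ α ∧ j ≤ β ∧ l + j ≤ α + β ∧ α + β + j ≤ k + 2 * l ∧ α + j ≤ k + l ∧
                β + j ≤ k + l then
              ((α : ℚ) + 1) * ((β : ℚ) + 1) * ((α : ℚ) + (β : ℚ) + 2) / 2
            else 0) := by
    intro α β
    rw [hexWeight_eq, sum_mul, sum_div]
    apply sum_congr rfl
    intro j _
    split <;> simp
  simp only [step1]
  have e1 : (∑ α ∈ range (k + l + 1), ∑ β ∈ range (k + l + 1), ∑ j ∈ range (min k l + 1),
        (if j ≤ α ∧ j ≤ β ∧ l + j ≤ α + β ∧ α + β + j ≤ k + 2 * l ∧ α + j ≤ k + l ∧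
            β + j ≤ k + l then
          ((α : ℚ) + 1) * ((β : ℚ) + 1) * ((α : ℚ) + (β : ℚ) + 2) / 2
        else 0))
      = ∑ α ∈ range (k + l + 1), ∑ j ∈ range (min k l + 1), ∑ β ∈ range (k + l + 1),
        (if j ≤ α ∧ j ≤ β ∧ l + j ≤ α + β ∧ α + β + j ≤ k + 2 * l ∧ α + j ≤ k + l ∧
            β + j ≤ k + l then
          ((α : ℚ) + 1) * ((β : ℚ) + 1) * ((α : ℚ) + (β : ℚ) + 2) / 2
        else 0) := sum_congr rfl fun α _ => Finset.sum_comm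
  rw [e1, Finset.sum_comm]
  have step2 : ∀ j ∈ range (min k l + 1),
      (∑ α ∈ range (k + l + 1), ∑ β ∈ range (k + l + 1),
          if j ≤ α ∧ j ≤ β ∧ l + j ≤ α + β ∧ α + β + j ≤ k + 2 * l ∧ α + j ≤ k + l ∧
              β + j ≤ k + l then
            ((α : ℚ) + 1) * ((β : ℚ) + 1) * ((α : ℚ) + (β : ℚ) + 2) / 2
          else 0)
        = PA ((k : ℚ) - (j : ℚ)) ((l : ℚ) - (j : ℚ)) (j : ℚ) ((l : ℚ) - (j : ℚ) + 1)
          + PB ((k : ℚ) - (j : ℚ)) ((l : ℚ) - (j : ℚ)) (j : ℚ) ((k : ℚ) - (j : ℚ)) := by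
    intro j hj
    have hjk : j ≤ k := by
      have := mem_range.mp hj
      omega
    have hjl : j ≤ l := by
      have := mem_range.mp hj
      omega
    obtain ⟨c, rfl⟩ : ∃ c, k = j + c := ⟨k - j, by omega⟩
    obtain ⟨d, rfl⟩ : ∃ d, l = j + d := ⟨l - j, by omega⟩
    rw [show ((j + c : ℕ) : ℚ) - (j : ℚ) = (c : ℚ) by push_cast; ring,
       show ((j + d : ℕ) : ℚ) - (j : ℚ) = (d : ℚ) by push_cast; ring]
    rw [show (j + c) + (j + d) + 1 = j + ((c + d + 1) + j) by omega]
    rw [sum_range_add']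
    refine zadd (sum_eq_zero fun i hi => sum_eq_zero fun b hb => ?_) ?_
    · have := mem_range.mp hi
      exact if_neg (by omega)
    rw [sum_range_add']
    refine addz (sum_eq_zero fun t ht => sum_eq_zero fun b hb => ?_) ?_
    · exact if_neg (by omega)
    calc (∑ a ∈ range (c + d + 1), ∑ β ∈ range (j + ((c + d + 1) + j)),
            if j ≤ j + a ∧ j ≤ β ∧ (j + d) + j ≤ (j + a) + β ∧
                (j + a) + β + j ≤ (j + c) + 2 * (j + d) ∧ (j + a) + j ≤ (j + c) + (j + d) ∧
                β + j ≤ (j + c) + (j + d) then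
              (((j + a : ℕ) : ℚ) + 1) * ((β : ℚ) + 1) * (((j + a : ℕ) : ℚ) + (β : ℚ) + 2) / 2
            else 0)
        = ∑ a ∈ range (c + d + 1), ∑ b ∈ range (c + d + 1),
            (if d ≤ a + b ∧ a + b ≤ c + 2 * d then
              ((a : ℚ) + (j : ℚ) + 1) * ((b : ℚ) + (j : ℚ) + 1)
                * ((a : ℚ) + (b : ℚ) + 2 * (j : ℚ) + 2) / 2
            else 0) := by
          apply sum_congr rfl
          intro a ha
          have ha' := mem_range.mp ha
          rw [sum_range_add']
          refine zadd (sum_eq_zero fun i hi => ?_) ?_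
          · have := mem_range.mp hi
            exact if_neg (by omega)
          rw [sum_range_add']
          refine addz (sum_eq_zero fun t ht => ?_) ?_
          · exact if_neg (by omega)
          apply sum_congr rfl
          intro b hb
          have hb' := mem_range.mp hb
          exact if_congr (by omega) (by push_cast; ring) rfl
      _ = PA (c : ℚ) (d : ℚ) (j : ℚ) ((d : ℚ) + 1) + PB (c : ℚ) (d : ℚ) (j : ℚ) (c : ℚ) :=
          hexEval c d j
  rw [sum_congr rfl step2, pjsum]
  rcases Nat.le_total k l with h | h
  · rw [min_eq_left h]
    simp only [PJ]
    push_cast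
    ring
  · rw [min_eq_right h]
    simp only [PJ]
    push_cast
    ring
end
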